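/- Let n ≥ 3 and q ≥ 1 be integers and let K_1, …, K_q be positive real numbers. If α in the open positive orthant of ℝ^q is a critical point of f, then the Hessian matrix H of f at α is negative semidefinite, its kernel is exactly the line ℝ·α, and every nonzero vector v ∈ ℝ^q orthogonal to α is an eigenvector of H with eigenvalue −8/((n−2) S(α)^{(n-2)/n}). In particular H has exactly q − 1 negative eigenvalues (counted with multiplicity) and a one-dimensional kernel. -/

import Mathlib

/-!
For `θ p = 2` the energy `f = |x|² / S(x)^θ` is homogeneous of degree zero (which is why `x`
spans the kernel of its Hessian), and the critical point equations say `Kⱼ xⱼ^(p-1) |x|² = xⱼ S(x)`. Substituting this relation into the second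
derivatives collapses the Hessian to `(4 - 2p) S^(-θ) (xᵢxⱼ/|x|² - δᵢⱼ)`, a negative multiple
(as `p > 2`) of the orthogonal projection onto `x^⊥`. Every spectral claim is then a statement
about that projection, the semidefiniteness being Cauchy–Schwarz.
-/

open Finset Matrix ContinuousLinearMap Filter Topology

namespace Matrix

variable {ι : Type*} [Fintype ι] [DecidableEq ι]

noncomputable def projPerp (a : ι → ℝ) : Matrix ι ι ℝ := 1 - (a ⬝ᵥ a)⁻¹ • vecMulVec a a

lemma projPerp_mulVec (a v : ι → ℝ) : projPerp a *ᵥ v = v - (a ⬝ᵥ v / a ⬝ᵥ a) • a := by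
  ext i
  simp [projPerp, sub_mulVec, smul_mulVec, vecMulVec_mulVec, div_eq_inv_mul, mul_assoc]

lemma dotProduct_projPerp_mulVec_nonneg (a v : ι → ℝ) : 0 ≤ v ⬝ᵥ projPerp a *ᵥ v := by
  have hcs : (a ⬝ᵥ v) ^ 2 ≤ (a ⬝ᵥ a) * (v ⬝ᵥ v) := by
    simpa only [dotProduct, ← sq] using sum_mul_sq_le_sq_mul_sq univ a v
  rw [projPerp_mulVec, dotProduct_sub, dotProduct_smul, smul_eq_mul, dotProduct_comm v a,
    sub_nonneg, div_mul_eq_mul_div, ← sq]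
  exact div_le_of_le_mul₀ (dotProduct_self_star_nonneg a) (dotProduct_self_star_nonneg v)
    (hcs.trans_eq (mul_comm _ _))

variable {a : ι → ℝ} (ha : a ≠ 0)
include ha

lemma projPerp_mulVec_eq_zero_iff {v : ι → ℝ} : projPerp a *ᵥ v = 0 ↔ v ∈ ℝ ∙ a := by
  have haa : a ⬝ᵥ a ≠ 0 := fun h => ha (dotProduct_self_eq_zero.mp h)
  rw [projPerp_mulVec, sub_eq_zero, Submodule.mem_span_singleton]
  constructor
  · exact fun h => ⟨_, h.symm⟩
  · rintro ⟨c, rfl⟩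
    rw [dotProduct_smul, smul_eq_mul, mul_div_cancel_right₀ _ haa]

lemma projPerp_mulVec_eq_self_iff {v : ι → ℝ} : projPerp a *ᵥ v = v ↔ a ⬝ᵥ v = 0 := by
  have haa : a ⬝ᵥ a ≠ 0 := fun h => ha (dotProduct_self_eq_zero.mp h)
  rw [projPerp_mulVec, sub_eq_self, smul_eq_zero, div_eq_zero_iff]
  tauto

variable {μ : ℝ} (hμ : μ ≠ 0)
include hμ

lemma ker_smul_projPerp : LinearMap.ker (μ • projPerp a).mulVecLin = ℝ ∙ a := by
  ext v
  rw [LinearMap.mem_ker, mulVecLin_apply, smul_mulVec, smul_eq_zero, or_iff_right hμ,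
    projPerp_mulVec_eq_zero_iff ha]

lemma eigenspace_smul_projPerp :
    Module.End.eigenspace (μ • projPerp a).mulVecLin μ = LinearMap.ker (dotProductEquiv ℝ ι a) := by
  ext v
  rw [Module.End.mem_eigenspace_iff, mulVecLin_apply, smul_mulVec, smul_right_inj hμ,
    projPerp_mulVec_eq_self_iff ha, LinearMap.mem_ker]
  rfl

lemma finrank_eigenspace_smul_projPerp :
    Module.finrank ℝ (Module.End.eigenspace (μ • projPerp a).mulVecLin μ) = Fintype.card ι - 1 := by
  have hf : dotProductEquiv ℝ ι a ≠ 0 := (LinearEquiv.map_ne_zero_iff _).mpr ha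
  have hdim := (dotProductEquiv ℝ ι a).finrank_ker_add_one_of_ne_zero hf
  rw [Module.finrank_fintype_fun_eq_card] at hdim
  rw [eigenspace_smul_projPerp ha hμ]
  omega

end Matrix

section Energy

variable {ι : Type*} [Fintype ι] (K : ι → ℝ) (p θ : ℝ)

noncomputable def weightedPowerSum (x : ι → ℝ) : ℝ := ∑ i, K i * x i ^ p

noncomputable def energy (x : ι → ℝ) : ℝ := (∑ i, x i ^ 2) / weightedPowerSum K p x ^ θ

noncomputable def energyPartial (j : ι) (x : ι → ℝ) : ℝ :=
  2 * x j * weightedPowerSum K p x ^ (-θ) -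
    θ * p * K j * x j ^ (p - 1) * (∑ i, x i ^ 2) * weightedPowerSum K p x ^ (-θ - 1)

variable {K p θ}

lemma weightedPowerSum_pos [Nonempty ι] (hK : ∀ i, 0 < K i) {x : ι → ℝ} (hx : ∀ i, 0 < x i) :
    0 < weightedPowerSum K p x :=
  sum_pos (fun i _ => mul_pos (hK i) (Real.rpow_pos_of_pos (hx i) p)) univ_nonempty

lemma sum_smul_proj_apply_single [DecidableEq ι] (c : ι → ℝ) (j : ι) :
    (∑ i, c i • proj i : (ι → ℝ) →L[ℝ] ℝ) (Pi.single j 1) = c j := by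
  simp [Pi.single_apply]

lemma hasFDerivAt_sum_sq (x : ι → ℝ) :
    HasFDerivAt (fun y : ι → ℝ => ∑ i, y i ^ 2) (∑ i, (2 * x i) • proj i : (ι → ℝ) →L[ℝ] ℝ) x :=
  HasFDerivAt.fun_sum fun i _ => by
    simpa [Function.comp_def] using
      (hasDerivAt_pow 2 (x i)).comp_hasFDerivAt x (hasFDerivAt_apply (𝕜 := ℝ) i x)

lemma hasFDerivAt_weightedPowerSum {x : ι → ℝ} (hx : ∀ i, x i ≠ 0) :
    HasFDerivAt (weightedPowerSum K p)
      (∑ i, (K i * (p * x i ^ (p - 1))) • proj i : (ι → ℝ) →L[ℝ] ℝ) x :=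
  HasFDerivAt.fun_sum fun i _ => by
    simpa [smul_smul] using
      ((hasFDerivAt_apply (𝕜 := ℝ) i x).rpow_const (p := p) (Or.inl (hx i))).const_mul (K i)

lemma eventually_nhds_forall_pos {x : ι → ℝ} (hx : ∀ i, 0 < x i) :
    ∀ᶠ y in 𝓝 x, ∀ i, 0 < y i :=
  eventually_all.2 fun i =>
    continuousAt_const.eventually_lt (continuous_apply i).continuousAt (hx i)

lemma fderiv_energy_apply_single [DecidableEq ι] [Nonempty ι] (hK : ∀ i, 0 < K i) {x : ι → ℝ}
    (hx : ∀ i, 0 < x i) (j : ι) :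
    fderiv ℝ (energy K p θ) x (Pi.single j 1) = energyPartial K p θ j x := by
  have hS := weightedPowerSum_pos (p := p) hK hx
  have heq : (fun y => (∑ i, y i ^ 2) * weightedPowerSum K p y ^ (-θ)) =ᶠ[𝓝 x] energy K p θ :=
    (eventually_nhds_forall_pos hx).mono fun y hy => by
      rw [energy, div_eq_mul_inv, ← Real.rpow_neg (weightedPowerSum_pos hK hy).le]
  have hderiv := ((hasFDerivAt_sum_sq x).mul
    ((hasFDerivAt_weightedPowerSum fun i => (hx i).ne').rpow_const (p := -θ) (Or.inl hS.ne'))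
    ).congr_of_eventuallyEq heq.symm
  rw [hderiv.fderiv]
  simp only [_root_.add_apply, _root_.smul_apply, sum_smul_proj_apply_single, smul_eq_mul,
    energyPartial]
  ring

lemma energyPartial_eq_zero_iff {x : ι → ℝ} (hS : 0 < weightedPowerSum K p x) (j : ι) :
    energyPartial K p θ j x = 0 ↔
      θ * p * K j * x j ^ (p - 1) * (∑ i, x i ^ 2) = 2 * x j * weightedPowerSum K p x := by
  have hfactor : energyPartial K p θ j x = weightedPowerSum K p x ^ (-θ - 1) *
      (2 * x j * weightedPowerSum K p x - θ * p * K j * x j ^ (p - 1) * (∑ i, x i ^ 2)) := by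
    rw [energyPartial, Real.rpow_sub_one hS.ne' (-θ)]
    field_simp
  rw [hfactor, mul_eq_zero, or_iff_right (Real.rpow_pos_of_pos hS _).ne', sub_eq_zero, eq_comm]

lemma rpow_sub_one_eq_of_energyPartial_eq_zero (hK : ∀ i, 0 < K i) (hθp : θ * p = 2)
    {x : ι → ℝ} (hS : 0 < weightedPowerSum K p x) (hN : 0 < ∑ i, x i ^ 2) {j : ι}
    (hcrit : energyPartial K p θ j x = 0) :
    x j ^ (p - 1) = x j * weightedPowerSum K p x / ((∑ i, x i ^ 2) * K j) := by
  have h := (energyPartial_eq_zero_iff hS j).mp hcrit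
  rw [hθp] at h
  rw [eq_div_iff (mul_pos hN (hK j)).ne']
  linear_combination h / 2

lemma fderiv_energyPartial_apply_single_of_critical [DecidableEq ι] [Nonempty ι]
    (hK : ∀ i, 0 < K i) (hθp : θ * p = 2) {x : ι → ℝ} (hx : ∀ i, 0 < x i)
    (hcrit : ∀ j, energyPartial K p θ j x = 0) (i j : ι) :
    fderiv ℝ (energyPartial K p θ j) x (Pi.single i 1) =
      (4 - 2 * p) * weightedPowerSum K p x ^ (-θ) * projPerp x i j := by
  have hS := weightedPowerSum_pos (p := p) hK hx
  have hS' := hasFDerivAt_weightedPowerSum (K := K) (p := p) fun i => (hx i).ne'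
  have hN : 0 < ∑ i, x i ^ 2 := sum_pos (fun i _ => pow_pos (hx i) 2) univ_nonempty
  have hpow m := rpow_sub_one_eq_of_energyPartial_eq_zero hK hθp hS hN (hcrit m)
  have hfirst := ((hasFDerivAt_apply (𝕜 := ℝ) j x).const_mul 2).fun_mul
    (hS'.rpow_const (p := -θ) (Or.inl hS.ne'))
  have hsecond := ((((hasFDerivAt_apply (𝕜 := ℝ) j x).rpow_const (p := p - 1) (Or.inl (hx j).ne')
    ).const_mul (θ * p * K j)).fun_mul (hasFDerivAt_sum_sq x)).fun_mul
    (hS'.rpow_const (p := -θ - 1) (Or.inl hS.ne'))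
  have hderiv : HasFDerivAt (energyPartial K p θ j) _ x := hfirst.fun_sub hsecond
  rw [hderiv.fderiv]
  simp only [_root_.add_apply, _root_.sub_apply, _root_.smul_apply, sum_smul_proj_apply_single,
    smul_eq_mul, proj_apply, Pi.single_apply]
  have hp : p ≠ 0 := by rintro rfl; simp at hθp
  have hθ : θ = 2 / p := by field_simp; linarith
  have hNdot : x ⬝ᵥ x = ∑ i, x i ^ 2 := by simp only [dotProduct, sq]
  rw [Real.rpow_sub_one hS.ne' (-θ - 1), Real.rpow_sub_one hS.ne' (-θ),
    Real.rpow_sub_one (hx j).ne' (p - 1), hpow i, hpow j, projPerp, Matrix.sub_apply, one_apply,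
    Matrix.smul_apply, vecMulVec_apply, smul_eq_mul, hNdot, hθ]
  have := hN.ne'
  have := (hx i).ne'
  have := (hx j).ne'
  have := (hK i).ne'
  have := (hK j).ne'
  rcases eq_or_ne i j with rfl | hij
  · simp only [if_true]
    field_simp
    ring
  · simp only [if_neg hij, if_neg hij.symm]
    field_simp
    ring

lemma hessian_energy_of_critical [DecidableEq ι] [Nonempty ι] (hK : ∀ i, 0 < K i)
    (hθp : θ * p = 2) {x : ι → ℝ} (hx : ∀ i, 0 < x i)
    (hcrit : ∀ j, fderiv ℝ (energy K p θ) x (Pi.single j 1) = 0) :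
    (of fun i j =>
      fderiv ℝ (fun y => fderiv ℝ (energy K p θ) y (Pi.single j 1)) x (Pi.single i 1)) =
      ((4 - 2 * p) * weightedPowerSum K p x ^ (-θ)) • projPerp x := by
  have hcrit' : ∀ j, energyPartial K p θ j x = 0 := fun j =>
    (fderiv_energy_apply_single hK hx j).symm.trans (hcrit j)
  ext i j
  have hpartial : (fun y => fderiv ℝ (energy K p θ) y (Pi.single j 1)) =ᶠ[𝓝 x]
      energyPartial K p θ j :=
    (eventually_nhds_forall_pos hx).mono fun y hy => fderiv_energy_apply_single hK hy j
  rw [of_apply, hpartial.fderiv_eq, fderiv_energyPartial_apply_single_of_critical hK hθp hx hcrit',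
    Matrix.smul_apply, smul_eq_mul]

end Energy

/-- At a critical point `α` of the reduced multi-bubble energy
`f(α) = (Σ αᵢ²)/(Σ Kᵢ αᵢ^{2n/(n-2)})^{(n-2)/n}` in the positive orthant, the Hessian
matrix `H` is negative semidefinite, its kernel is exactly the line `ℝ·α`, every nonzero
vector orthogonal to `α` is an eigenvector with eigenvalue `−8/((n−2)S(α)^{(n-2)/n})`,
and hence `H` has a one-dimensional kernel and `q − 1` negative eigenvalues. -/
theorem stmt_5 (n q : ℕ) (hn : 3 ≤ n) (hq : 1 ≤ q)
    (K : Fin q → ℝ) (hK : ∀ i, 0 < K i)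
    (f : (Fin q → ℝ) → ℝ)
    (hf : f = fun α => (∑ i, α i ^ 2) /
        (∑ i, K i * α i ^ (2 * (n : ℝ) / ((n : ℝ) - 2))) ^ (((n : ℝ) - 2) / (n : ℝ)))
    (α : Fin q → ℝ) (hα : ∀ i, 0 < α i)
    (hcrit : ∀ i, fderiv ℝ f α (Pi.single i 1) = 0)
    (H : Matrix (Fin q) (Fin q) ℝ)
    (hH : H = Matrix.of fun i j =>
      fderiv ℝ (fun x => fderiv ℝ f x (Pi.single j 1)) α (Pi.single i 1)) :
    (∀ v : Fin q → ℝ, v ⬝ᵥ H.mulVec v ≤ 0) ∧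
    (∀ v : Fin q → ℝ, H.mulVec v = 0 ↔ ∃ c : ℝ, v = c • α) ∧
    (∀ v : Fin q → ℝ, v ≠ 0 → (∑ i, v i * α i) = 0 →
      H.mulVec v = (-8 / (((n : ℝ) - 2) *
        (∑ k, K k * α k ^ (2 * (n : ℝ) / ((n : ℝ) - 2))) ^ (((n : ℝ) - 2) / (n : ℝ)))) • v) ∧
    Module.finrank ℝ (LinearMap.ker H.mulVecLin) = 1 ∧
    Module.finrank ℝ (Module.End.eigenspace H.mulVecLin
      (-8 / (((n : ℝ) - 2) *
        (∑ k, K k * α k ^ (2 * (n : ℝ) / ((n : ℝ) - 2))) ^ (((n : ℝ) - 2) / (n : ℝ))))) = q - 1 := by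
  set p : ℝ := 2 * n / (n - 2)
  set θ : ℝ := (n - 2) / n
  have hn2 : (2 : ℝ) < n := by exact_mod_cast hn
  have hθp : θ * p = 2 := by
    have : (n : ℝ) - 2 ≠ 0 := by linarith
    have : (n : ℝ) ≠ 0 := by linarith
    simp only [θ, p]
    field_simp
  have hp : 2 < p := by rw [lt_div_iff₀ (by linarith)]; linarith
  have : Nonempty (Fin q) := ⟨⟨0, hq⟩⟩
  have hS := weightedPowerSum_pos (p := p) hK hα
  have hα0 : α ≠ 0 := fun h => (hα ⟨0, hq⟩).ne' (congrFun h _)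
  set μ := (4 - 2 * p) * weightedPowerSum K p α ^ (-θ)
  have hμ : μ < 0 := mul_neg_of_neg_of_pos (by linarith) (Real.rpow_pos_of_pos hS _)
  have hμ_eq : -8 / (((n : ℝ) - 2) * (∑ k, K k * α k ^ p) ^ θ) = μ := by
    change -8 / (_ * weightedPowerSum K p α ^ θ) = _
    have : (n : ℝ) - 2 ≠ 0 := by linarith
    simp only [μ, Real.rpow_neg hS.le, p]
    field_simp
    ring
  have hH' : H = μ • projPerp α := by
    subst hf
    exact hH.trans (hessian_energy_of_critical hK hθp hα hcrit)
  rw [hμ_eq, hH']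
  refine ⟨fun v => ?_, fun v => ?_, fun v _ hv => ?_, ?_, ?_⟩
  · rw [smul_mulVec, dotProduct_smul, smul_eq_mul]
    exact mul_nonpos_of_nonpos_of_nonneg hμ.le (dotProduct_projPerp_mulVec_nonneg α v)
  · rw [← mulVecLin_apply, ← LinearMap.mem_ker, ker_smul_projPerp hα0 hμ.ne,
      Submodule.mem_span_singleton]
    exact exists_congr fun c => eq_comm
  · rw [smul_mulVec, (projPerp_mulVec_eq_self_iff hα0).mpr (by rwa [dotProduct_comm])]
  · rw [ker_smul_projPerp hα0 hμ.ne, finrank_span_singleton hα0]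
  · rw [finrank_eigenspace_smul_projPerp hα0 hμ.ne, Fintype.card_fin]
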